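/- arXiv:2302.13127 — 2 statements merged into one kernel-verified Lean document; each statement's English description precedes it below -/
import Mathlib

section
/- If p ∈ {2, 3} and d is an integer with d > 3 and p ∤ d, then B_0(p,d) < B'(p,d). -/
/-- `lambdaP p m = ∑ i·c_i·p^i` where `m = ∑ c_i p^i` is the base-`p` expansion. -/
def lambdaP (p m : ℕ) : ℕ :=
  ∑ i ∈ Finset.range (Nat.digits p m).length, i * (Nat.digits p m).getD i 0 * p ^ i

/-- The Brumer–Kramer local conductor bound divided by `d` (rounded down):
`B'(p,d) = 2 + ⌊(p·t + (p−1)·λ_p(t))/d⌋` with `t = ⌊2d/(p−1)⌋`. -/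
def Bprime (p d : ℕ) : ℕ :=
  2 + (p * (2 * d / (p - 1)) + (p - 1) * lambdaP p (2 * d / (p - 1))) / d

/-- The bound `B_0(p,d)` of the paper. -/
def B0 (p d : ℕ) : ℕ :=
  if p = 2 then 8 + 2 * padicValNat 2 d
  else if p = 3 then 5 + 2 * padicValNat 3 d
  else if (p - 1) ∣ 2 * d then 4 + 2 * padicValNat p d
  else 2

lemma list_sum_pow (p : ℕ) (L : List ℕ) :
    ∑ i ∈ Finset.range L.length, L.getD i 0 * p ^ i = Nat.ofDigits p L := by
  induction L with
  | nil => simp [Nat.ofDigits]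
  | cons a L ih =>
    rw [Nat.ofDigits_cons, List.length_cons, Finset.sum_range_succ']
    simp only [List.getD_cons_succ, List.getD_cons_zero, pow_zero, mul_one, pow_succ]
    rw [add_comm, ← ih, Finset.mul_sum]
    exact congrArg (a + ·) (Finset.sum_congr rfl fun i _ => by ring)

lemma sum_digits (p m : ℕ) :
    ∑ i ∈ Finset.range (Nat.digits p m).length, (Nat.digits p m).getD i 0 * p ^ i = m := by
  rw [list_sum_pow, Nat.ofDigits_digits]

lemma lambda_ge (p m : ℕ) (hp : 1 < p) : m ≤ lambdaP p m + (p - 1) := by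
  rcases h : (Nat.digits p m).length with _ | n
  · have : m = 0 := Nat.digits_eq_nil_iff_eq_zero.mp (List.length_eq_zero_iff.mp h)
    simp [this]
  · have hm := sum_digits p m
    rw [h] at hm
    have hl : lambdaP p m = ∑ i ∈ Finset.range (n + 1),
        i * (Nat.digits p m).getD i 0 * p ^ i := by rw [lambdaP, h]
    rw [Finset.sum_range_succ'] at hm
    rw [Finset.sum_range_succ'] at hl
    simp only [pow_zero, mul_one, Nat.zero_mul, Nat.add_zero] at hm hl
    have h0 : (Nat.digits p m).getD 0 0 ≤ p - 1 := by
      have : (Nat.digits p m).getD 0 0 < p := by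
        rcases Nat.lt_or_ge 0 (Nat.digits p m).length with h' | h'
        · rw [List.getD_eq_getElem _ _ h']
          exact Nat.digits_lt_base hp (List.getElem_mem h')
        · simp [List.getD_eq_default _ _ h']; omega
      omega
    have hterm : ∑ i ∈ Finset.range n, (Nat.digits p m).getD (i + 1) 0 * p ^ (i + 1) ≤
        ∑ i ∈ Finset.range n, (i + 1) * (Nat.digits p m).getD (i + 1) 0 * p ^ (i + 1) := by
      apply Finset.sum_le_sum
      intro i _
      have : 1 * ((Nat.digits p m).getD (i + 1) 0 * p ^ (i + 1)) ≤
          (i + 1) * ((Nat.digits p m).getD (i + 1) 0 * p ^ (i + 1)) :=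
        Nat.mul_le_mul_right _ (by omega)
      nlinarith
    omega

lemma lambda_double (d : ℕ) (hd : 0 < d) : lambdaP 2 (2 * d) = 2 * lambdaP 2 d + 2 * d := by
  have hdig : Nat.digits 2 (2 * d) = 0 :: Nat.digits 2 d := by
    rw [Nat.digits_def' one_lt_two (by omega)]
    congr 1
    · omega
    · congr 1; omega
  have hsum := sum_digits 2 d
  rw [lambdaP, hdig, List.length_cons, Finset.sum_range_succ']
  simp only [List.getD_cons_succ, List.getD_cons_zero, pow_zero, mul_one, Nat.mul_zero,
    Nat.zero_mul, Nat.add_zero]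
  have : ∑ x ∈ Finset.range (Nat.digits 2 d).length,
      (x + 1) * (Nat.digits 2 d).getD x 0 * 2 ^ (x + 1) =
      ∑ x ∈ Finset.range (Nat.digits 2 d).length,
      (2 * (x * (Nat.digits 2 d).getD x 0 * 2 ^ x) + 2 * ((Nat.digits 2 d).getD x 0 * 2 ^ x)) :=
    Finset.sum_congr rfl fun i _ => by ring
  rw [this, Finset.sum_add_distrib, ← Finset.mul_sum, ← Finset.mul_sum, hsum, lambdaP]

theorem stmt_2 (p d : ℕ) (hp : p = 2 ∨ p = 3) (hd : 3 < d) (hndvd : ¬ p ∣ d) :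
    B0 p d < Bprime p d := by
  have hv : padicValNat p d = 0 := padicValNat.eq_zero_of_not_dvd hndvd
  rcases hp with rfl | rfl
  · -- p = 2
    have h1 : lambdaP 2 d + 1 ≥ d := by have := lambda_ge 2 d one_lt_two; omega
    have h2 : lambdaP 2 (2 * d) = 2 * lambdaP 2 d + 2 * d := lambda_double d (by omega)
    have hB : Bprime 2 d = 2 + (2 * (2 * d) + lambdaP 2 (2 * d)) / d := by
      simp [Bprime]
    rw [B0, if_pos rfl, hv, hB, h2]
    have : 7 ≤ (2 * (2 * d) + (2 * lambdaP 2 d + 2 * d)) / d := by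
      rw [Nat.le_div_iff_mul_le (by omega)]
      omega
    omega
  · -- p = 3
    have h1 : lambdaP 3 d + 2 ≥ d := by have := lambda_ge 3 d (by norm_num); omega
    have hB : Bprime 3 d = 2 + (3 * d + 2 * lambdaP 3 d) / d := by
      have : 2 * d / (3 - 1) = d := by omega
      simp [Bprime, this]
    rw [B0, if_neg (by norm_num), if_pos rfl, hv, hB]
    have : 4 ≤ (3 * d + 2 * lambdaP 3 d) / d := by
      rw [Nat.le_div_iff_mul_le (by omega)]
      omega
    omega
end

section
/- Let p be a prime and d a positive integer with (p−1) ∣ 2d. Then B'(p,d) ≥ 4 + 2·v_p(d) + 4·v_p(2) + v_p(3) (i.e., B'(p,d) ≥ 8 + 2·v_2(d) if p = 2, B'(3,d) ≥ 5 + 2·v_3(d), and B'(p,d) ≥ 4 + 2·v_p(d) if p ≥ 5). Moreover, writing 2d = a·p^m·(p−1) with p ∤ a, equality holds whenever a < p. -/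
lemma ofDigits_sum (p : ℕ) (l : List ℕ) :
    (Nat.ofDigits p l : ℕ) = ∑ j ∈ Finset.range l.length, l.getD j 0 * p ^ j := by
  induction l with
  | nil => simp
  | cons c l ih =>
      rw [Nat.ofDigits_cons, List.length_cons, Finset.sum_range_succ']
      simp [ih, Finset.mul_sum, mul_comm, mul_assoc, mul_left_comm, pow_succ]
      ring

lemma lambdaP_shift (p a k : ℕ) (hp : 1 < p) (ha : 0 < a) :
    lambdaP p (p ^ k * a) = p ^ k * (k * a + lambdaP p a) := by
  unfold lambdaP
  rw [Nat.digits_base_pow_mul hp ha]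
  set l := Nat.digits p a with hl
  rw [List.length_append, List.length_replicate]
  rw [Finset.range_eq_Ico, ← Finset.sum_Ico_consecutive _ (Nat.zero_le k) (Nat.le_add_right k l.length)]
  have h1 : ∑ i ∈ Finset.Ico 0 k, i * (List.replicate k 0 ++ l).getD i 0 * p ^ i = 0 := by
    apply Finset.sum_eq_zero
    intro i hi
    simp only [Finset.mem_Ico] at hi
    rw [List.getD_append _ _ _ _ (by simpa using hi.2)]
    simp [List.getD_eq_getElem?_getD]
  rw [h1, zero_add, Finset.sum_Ico_eq_sum_range]
  simp only [Nat.add_sub_cancel_left, ← Finset.range_eq_Ico]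
  have h2 : ∀ j ∈ Finset.range l.length,
      (k + j) * (List.replicate k 0 ++ l).getD (k + j) 0 * p ^ (k + j)
        = p ^ k * ((k * (l.getD j 0 * p ^ j)) + (j * l.getD j 0 * p ^ j)) := by
    intro j hj
    rw [List.getD_append_right _ _ _ _ (by simp)]
    simp only [List.length_replicate, Nat.add_sub_cancel_left]
    ring
  rw [Finset.sum_congr rfl h2, ← Finset.mul_sum, Finset.sum_add_distrib, ← Finset.mul_sum]
  have h3 : ∑ j ∈ Finset.range l.length, l.getD j 0 * p ^ j = a := by
    rw [← ofDigits_sum, hl, Nat.ofDigits_digits]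
  rw [h3]

lemma lambdaP_single (p a : ℕ) (h0 : 0 < a) (h : a < p) : lambdaP p a = 0 := by
  have hp : 1 < p := lt_of_le_of_lt h0 h
  have : Nat.digits p a = [a] := by
    rw [Nat.digits_def' hp h0, Nat.mod_eq_of_lt h, Nat.div_eq_of_lt h]
    simp
  unfold lambdaP
  simp [this]

lemma lambdaP_ge (p t : ℕ) (hp : p.Prime) : padicValNat p t * t ≤ lambdaP p t := by
  rcases Nat.eq_zero_or_pos t with rfl | ht
  · simp
  have : Fact p.Prime := ⟨hp⟩
  set v := padicValNat p t with hv
  obtain ⟨a, ha⟩ : p ^ v ∣ t := pow_padicValNat_dvd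
  have ha0 : 0 < a := by
    rcases Nat.eq_zero_or_pos a with rfl | h; · simp at ha; omega
    exact h
  rw [ha, lambdaP_shift p a v hp.one_lt ha0]
  calc v * (p ^ v * a) = p ^ v * (v * a) := by ring
    _ ≤ p ^ v * (v * a + lambdaP p a) := Nat.mul_le_mul_left _ (Nat.le_add_right _ _)

theorem stmt_12 (p d : ℕ) (hp : p.Prime) (hd : 0 < d) (hdvd : (p - 1) ∣ 2 * d) :
    4 + 2 * padicValNat p d + 4 * padicValNat p 2 + padicValNat p 3 ≤ Bprime p d ∧
      ∀ a m : ℕ, 2 * d = a * p ^ m * (p - 1) → ¬ p ∣ a → a < p →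
        Bprime p d = 4 + 2 * padicValNat p d + 4 * padicValNat p 2 + padicValNat p 3 := by
  have : Fact p.Prime := ⟨hp⟩
  have hp2 : 2 ≤ p := hp.two_le
  obtain ⟨q, hq⟩ : ∃ q, p = q + 1 := ⟨p - 1, by omega⟩
  have hq1 : 1 ≤ q := by omega
  have hpq : p - 1 = q := by omega
  obtain ⟨t, ht⟩ := hdvd
  rw [hpq] at ht
  have ht0 : 0 < t := by nlinarith
  have htdiv : 2 * d / (p - 1) = t := by rw [hpq, ht]; exact Nat.mul_div_cancel_left _ (by omega)
  have hqnd : ¬ p ∣ q := fun h => by have := Nat.le_of_dvd (by omega) h; omega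
  set v := padicValNat p d with hv
  have hvt : padicValNat p t = padicValNat p 2 + v := by
    have h1 : padicValNat p (2 * d) = padicValNat p 2 + v :=
      padicValNat.mul (by norm_num) (by omega)
    have h2 : padicValNat p (q * t) = padicValNat p t := by
      rw [padicValNat.mul (by omega) (by omega), padicValNat.eq_zero_of_not_dvd hqnd, zero_add]
    rw [← h2, ← ht, h1]
  have hlam := lambdaP_ge p t hp
  rw [hvt] at hlam
  unfold Bprime
  rw [htdiv, hpq]
  constructor
  · set v2 := padicValNat p 2 with hv2
    set v3 := padicValNat p 3 with hv3
    have key : (2 + 2 * v + 4 * v2 + v3) * d ≤ p * t + q * lambdaP p t := by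
      refine Nat.le_of_mul_le_mul_left ?_ (show (0:ℕ) < 2 by norm_num)
      have h2 : 2 * ((2 + 2 * v + 4 * v2 + v3) * d) = (2 + 2 * v + 4 * v2 + v3) * (q * t) := by
        rw [← ht]; ring
      rw [h2]
      have hqv : 2 * q * v2 + q * v3 ≤ 2 := by
        rcases Nat.lt_or_ge p 3 with h3 | h3
        · have hpe : p = 2 := by omega
          have hqe : q = 1 := by omega
          subst hqe
          have ev2 : v2 = 1 := by rw [hv2, hpe]; exact padicValNat.self one_lt_two
          have ev3 : v3 = 0 := by rw [hv3, hpe]; exact padicValNat.eq_zero_of_not_dvd (by norm_num)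
          omega
        rcases Nat.lt_or_ge p 4 with h4 | h4
        · have hpe : p = 3 := by omega
          have hqe : q = 2 := by omega
          subst hqe
          have ev2 : v2 = 0 := by rw [hv2, hpe]; exact padicValNat.eq_zero_of_not_dvd (by norm_num)
          have ev3 : v3 = 1 := by rw [hv3, hpe]; exact padicValNat.self (by norm_num)
          omega
        · have h5 : 5 ≤ p := by
            rcases Nat.lt_or_ge p 5 with h' | h'
            · exfalso; interval_cases p <;> simp_all (config := {decide := true})
            · exact h'
          have ev2 : v2 = 0 := by
            rw [hv2]; exact padicValNat.eq_zero_of_not_dvd (fun h => by have := Nat.le_of_dvd (by norm_num) h; omega)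
          have ev3 : v3 = 0 := by
            rw [hv3]; exact padicValNat.eq_zero_of_not_dvd (fun h => by have := Nat.le_of_dvd (by norm_num) h; omega)
          simp [ev2, ev3]
      have hlam' : 2 * q * ((v2 + v) * t) ≤ 2 * q * lambdaP p t := Nat.mul_le_mul_left _ hlam
      have expand : (2 + 2 * v + 4 * v2 + v3) * (q * t)
          = (2 * q * v2 + q * v3) * t + (2 * q + 2 * q * v) * t + (2 * q * v2) * t := by ring
      have hrhs : 2 * (p * t + q * lambdaP p t) = (2 * q + 2) * t + 2 * q * lambdaP p t := by
        rw [hq]; ring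
      rw [expand, hrhs]
      have h1 : (2 * q * v2 + q * v3) * t ≤ 2 * t := Nat.mul_le_mul_right _ hqv
      have h2' : (2 * q * v) * t + (2 * q * v2) * t ≤ 2 * q * lambdaP p t := by
        calc (2 * q * v) * t + (2 * q * v2) * t = 2 * q * ((v2 + v) * t) := by ring
          _ ≤ 2 * q * lambdaP p t := hlam'
      calc (2 * q * v2 + q * v3) * t + (2 * q + 2 * q * v) * t + (2 * q * v2) * t
          = (2 * q * v2 + q * v3) * t + 2 * q * t + ((2 * q * v) * t + (2 * q * v2) * t) := by ring
        _ ≤ 2 * t + 2 * q * t + 2 * q * lambdaP p t := by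
            gcongr
        _ = (2 * q + 2) * t + 2 * q * lambdaP p t := by ring
    have := (Nat.le_div_iff_mul_le hd).2 key
    omega
  · intro a m heq hpa hap
    have ha0 : 0 < a := by
      rcases Nat.eq_zero_or_pos a with rfl | h; · simp at heq; omega
      exact h
    have hta : t = p ^ m * a := by
      have : q * t = q * (p ^ m * a) := by rw [← ht, heq]; ring
      exact Nat.eq_of_mul_eq_mul_left (by omega) this
    have hlameq : lambdaP p t = p ^ m * (m * a) := by
      rw [hta, lambdaP_shift p a m hp.one_lt ha0, lambdaP_single p a ha0 hap, add_zero]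
    have hm : padicValNat p 2 + v = m := by
      rw [← hvt, hta, padicValNat.mul (by positivity) (by omega), padicValNat.prime_pow,
        padicValNat.eq_zero_of_not_dvd hpa, add_zero]
    rcases Nat.lt_or_ge p 3 with h3 | h3
    · -- p = 2
      have hpe : p = 2 := by omega
      subst hpe
      have hv2 : padicValNat 2 2 = 1 := padicValNat.self one_lt_two
      have hv3 : padicValNat 2 3 = 0 := padicValNat.eq_zero_of_not_dvd (by norm_num)
      have hqe : q = 1 := by omega
      subst hqe
      have hmv : m = v + 1 := by omega
      have hdeq : d = 2 ^ v * a := by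
        have : 2 * d = 2 * (2 ^ v * a) := by
          rw [ht, hta, hmv]; ring
        omega
      have hN : 2 * (2 ^ m * a) + 1 * (2 ^ m * (m * a)) = (6 + 2 * v) * d := by
        rw [hmv, hdeq]; ring
      rw [hlameq, hta, hN, Nat.mul_div_cancel _ hd, hv2, hv3]
      omega
    rcases Nat.lt_or_ge p 4 with h4 | h4
    · -- p = 3
      have hpe : p = 3 := by omega
      subst hpe
      have hv2 : padicValNat 3 2 = 0 := padicValNat.eq_zero_of_not_dvd (by norm_num)
      have hv3 : padicValNat 3 3 = 1 := padicValNat.self (by norm_num)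
      have hqe : q = 2 := by omega
      subst hqe
      have hmv : m = v := by omega
      have hdeq : d = 3 ^ v * a := by
        have : 2 * d = 2 * (3 ^ v * a) := by rw [ht, hta, hmv]
        omega
      have hN : 3 * (3 ^ m * a) + 2 * (3 ^ m * (m * a)) = (3 + 2 * v) * d := by
        rw [hmv, hdeq]; ring
      rw [hlameq, hta, hN, Nat.mul_div_cancel _ hd, hv2, hv3]
      omega
    · -- p ≥ 5
      have h5 : 5 ≤ p := by
        rcases Nat.lt_or_ge p 5 with h' | h'
        · exfalso; interval_cases p <;> simp_all (config := {decide := true})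
        · exact h'
      have hv2 : padicValNat p 2 = 0 :=
        padicValNat.eq_zero_of_not_dvd (fun h => by have := Nat.le_of_dvd (by norm_num) h; omega)
      have hv3 : padicValNat p 3 = 0 :=
        padicValNat.eq_zero_of_not_dvd (fun h => by have := Nat.le_of_dvd (by norm_num) h; omega)
      have hmv : m = v := by omega
      have htd : t < d := by
        have : 2 * d = q * t := ht
        nlinarith
      have hN : p * t + q * lambdaP p t = t + (2 + 2 * v) * d := by
        apply Nat.eq_of_mul_eq_mul_left (show (0:ℕ) < 2 by norm_num)
        have hmt : lambdaP p t = m * t := by rw [hlameq, hta]; ring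
        have e2 : 2 * (t + (2 + 2 * v) * d) = 2 * t + (2 + 2 * v) * (2 * d) := by ring
        rw [hmt, e2, ht, ← hmv, hq]; ring
      rw [hN, Nat.add_mul_div_right _ _ hd, Nat.div_eq_of_lt htd, hv2, hv3]
      omega
end
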